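/- arXiv:1908.11300 — 10 statements merged into one kernel-verified Lean document; each statement's English description precedes it below -/
import Mathlib

section
/- The disjoint union of C2 and C3 has no graceful difference labeling: there is no bijection f from the 5 vertices to {1,...,5} such that the five difference labels on the arcs of C2 + C3 are pairwise distinct. -/
/-- Cyclic successor on `Fin k`. -/
def cyc (k : ℕ) (hk : 0 < k) (i : Fin k) : Fin k := ⟨(i.val + 1) % k, Nat.mod_lt _ hk⟩

/-- `f` is a graceful difference labeling of the digraph with arc set `A`:
`f` is a bijection from the vertices onto `{1,…,|V|}` and the arc labels
`f v - f u` are pairwise distinct. -/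
def IsGdlOn {V : Type} [Fintype V] (A : Set (V × V)) (f : V → ℤ) : Prop :=
  Set.BijOn f Set.univ (Set.Icc 1 (Fintype.card V : ℤ)) ∧
  Set.InjOn (fun a : V × V => f a.2 - f a.1) A

/-- Arc set of the directed circuit on `Fin k`. -/
def circuitArcs (k : ℕ) (hk : 0 < k) : Set (Fin k × Fin k) :=
  Set.range (fun i => (i, cyc k hk i))

/-- `C2 + C3` has no graceful difference labeling. Vertices `0,1` form the
2-circuit and `2,3,4` form the 3-circuit. -/
theorem stmt_2 :
    ¬ ∃ f : Fin 5 → ℤ,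
      IsGdlOn ({((0 : Fin 5), (1 : Fin 5)), (1, 0), (2, 3), (3, 4), (4, 2)} : Set (Fin 5 × Fin 5)) f := by
  rintro ⟨f, ⟨hmaps, hinj, -⟩, hdiff⟩
  have hb : ∀ i : Fin 5, 1 ≤ f i ∧ f i ≤ 5 := by
    intro i
    have := hmaps (Set.mem_univ i)
    simpa [Fintype.card_fin] using this
  have hne : ∀ i j : Fin 5, i ≠ j → f i ≠ f j := fun i j h e =>
    h (hinj (Set.mem_univ i) (Set.mem_univ j) e)
  have key : ∀ a b : Fin 5 × Fin 5,
      a ∈ ({((0 : Fin 5), (1 : Fin 5)), (1, 0), (2, 3), (3, 4), (4, 2)} : Set (Fin 5 × Fin 5)) →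
      b ∈ ({((0 : Fin 5), (1 : Fin 5)), (1, 0), (2, 3), (3, 4), (4, 2)} : Set (Fin 5 × Fin 5)) →
      f a.2 - f a.1 = f b.2 - f b.1 → a = b := fun a b ha hb h => hdiff ha hb h
  have d1 : f 1 - f 0 ≠ f 3 - f 2 := fun h => by
    have := key (0, 1) (2, 3) (by simp) (by simp) h; simp at this
  have d2 : f 1 - f 0 ≠ f 4 - f 3 := fun h => by
    have := key (0, 1) (3, 4) (by simp) (by simp) h; simp at this
  have d3 : f 1 - f 0 ≠ f 2 - f 4 := fun h => by
    have := key (0, 1) (4, 2) (by simp) (by simp) h; simp at this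
  have d4 : f 0 - f 1 ≠ f 3 - f 2 := fun h => by
    have := key (1, 0) (2, 3) (by simp) (by simp) h; simp at this
  have d5 : f 0 - f 1 ≠ f 4 - f 3 := fun h => by
    have := key (1, 0) (3, 4) (by simp) (by simp) h; simp at this
  have d6 : f 0 - f 1 ≠ f 2 - f 4 := fun h => by
    have := key (1, 0) (4, 2) (by simp) (by simp) h; simp at this
  have d7 : f 3 - f 2 ≠ f 4 - f 3 := fun h => by
    have := key (2, 3) (3, 4) (by simp) (by simp) h; simp at this
  have d8 : f 3 - f 2 ≠ f 2 - f 4 := fun h => by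
    have := key (2, 3) (4, 2) (by simp) (by simp) h; simp at this
  have d9 : f 4 - f 3 ≠ f 2 - f 4 := fun h => by
    have := key (3, 4) (4, 2) (by simp) (by simp) h; simp at this
  have b0 := hb 0; have b1 := hb 1; have b2 := hb 2; have b3 := hb 3; have b4 := hb 4
  have n01 := hne 0 1 (by decide); have n02 := hne 0 2 (by decide)
  have n03 := hne 0 3 (by decide); have n04 := hne 0 4 (by decide)
  have n12 := hne 1 2 (by decide); have n13 := hne 1 3 (by decide)
  have n14 := hne 1 4 (by decide); have n23 := hne 2 3 (by decide)
  have n24 := hne 2 4 (by decide); have n34 := hne 3 4 (by decide)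
  omega
end

section
/- For every k ≥ 4, the directed circuit Ck on vertices v1,...,vk with arcs v_i v_{i+1} (1 ≤ i < k) and v_k v_1 has a graceful difference labeling. -/
/-!
Label the circuit by the zigzag `1, k, 2, k-1, 3, …`. Its steps are `k-1, -(k-2), k-3, …, ±1`,
distinct by absolute value, and the closing arc gets `-⌊k/2⌋`. The negative steps `-(k-1-n)`
occur at odd `n`, so they all have the parity of `k`; hence the closing difference is new exactly when
`k ≡ 1, 2 (mod 4)`.

For `k ≡ 0, 3 (mod 4)`, `k ≥ 7`, run the zigzag on `{3, …, k-2}` and finish with `2, k-1, 1, k`.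
The arc into `2` gets `-(⌊(k-4)/2⌋ + 1)`, of the wrong parity to clash with the inner zigzag, and
the last four arcs get `k-3, 2-k, k-1, 3-k`, larger in absolute value than all the others.
For `k = 4` take `1, 2, 4, 3`.
-/

open Set Function

lemma isGdlOn_circuitArcs_of_injective {k : ℕ} (hk : 0 < k) (f : Fin k → ℤ)
    (hf_mem : ∀ i, f i ∈ Icc 1 (k : ℤ)) (hf : Injective f)
    (hd : Injective fun i => f (cyc k hk i) - f i) :
    IsGdlOn (circuitArcs k hk) f := by
  refine ⟨⟨fun i _ => by simpa using hf_mem i, hf.injOn, ?_⟩, ?_⟩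
  · have := Finset.surjOn_of_injOn_of_card_le (s := Finset.univ) (t := Finset.Icc 1 (k : ℤ)) f
      (fun i _ => by simpa using hf_mem i) hf.injOn (by simp)
    simpa using this
  · rintro _ ⟨i, rfl⟩ _ ⟨j, rfl⟩ h
    rw [hd h]

lemma val_cyc_eq_succ_or_eq_zero (k : ℕ) (hk : 0 < k) (i : Fin k) :
    (i : ℕ) < k - 1 ∧ (cyc k hk i : ℕ) = i + 1 ∨ (i : ℕ) = k - 1 ∧ (cyc k hk i : ℕ) = 0 := by
  simp only [cyc]
  rcases Nat.lt_or_ge ((i : ℕ) + 1) k with h | h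
  · exact .inl ⟨by omega, Nat.mod_eq_of_lt h⟩
  · have : (i : ℕ) + 1 = k := by omega
    exact .inr ⟨by omega, by simp [this]⟩

lemma injective_cyclic_sub_of {k : ℕ} (hk : 0 < k) (g : ℕ → ℤ)
    (hpath : InjOn (fun n => g (n + 1) - g n) (Iio (k - 1)))
    (hclose : ∀ n < k - 1, g (n + 1) - g n ≠ g 0 - g (k - 1)) :
    Injective fun i : Fin k => g (cyc k hk i) - g i := by
  intro i j h
  simp only at h
  apply Fin.ext
  rcases val_cyc_eq_succ_or_eq_zero k hk i with ⟨hi, hci⟩ | ⟨hi, hci⟩ <;>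
    rcases val_cyc_eq_succ_or_eq_zero k hk j with ⟨hj, hcj⟩ | ⟨hj, hcj⟩ <;>
    rw [hci, hcj] at h
  · exact hpath hi hj h
  · exact absurd (hj ▸ h) (hclose i hi)
  · exact absurd (hi ▸ h.symm) (hclose j hj)
  · omega

def zigzag (m n : ℕ) : ℤ := if n % 2 = 0 then (n / 2 : ℕ) + 1 else (m : ℤ) - (n / 2 : ℕ)

section zigzag

variable {m n : ℕ}

lemma zigzag_mem (hn : n < m) : zigzag m n ∈ Icc 1 (m : ℤ) := by
  unfold zigzag; constructor <;> split_ifs <;> omega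

lemma zigzag_injOn (m : ℕ) : InjOn (zigzag m) (Iio m) := by
  intro n hn n' hn' h
  simp only [mem_Iio, zigzag] at *
  split_ifs at h <;> omega

lemma zigzag_zero (m : ℕ) : zigzag m 0 = 1 := by simp [zigzag]

lemma zigzag_pred (hm : 0 < m) : zigzag m (m - 1) = (m / 2 : ℕ) + 1 := by
  unfold zigzag; split_ifs <;> omega

lemma zigzag_succ_sub (h : n + 1 < m) :
    zigzag m (n + 1) - zigzag m n = if n % 2 = 0 then (m : ℤ) - 1 - n else (n : ℤ) + 1 - m := by
  unfold zigzag; split_ifs <;> omega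

lemma zigzag_succ_sub_injOn (m : ℕ) :
    InjOn (fun n => zigzag m (n + 1) - zigzag m n) (Iio (m - 1)) := by
  intro n hn n' hn' h
  simp only [mem_Iio] at hn hn'
  simp only [zigzag_succ_sub (show n + 1 < m by omega),
    zigzag_succ_sub (show n' + 1 < m by omega)] at h
  split_ifs at h <;> omega

lemma zigzag_succ_sub_ne_neg {j : ℕ} (h : n + 1 < m) (hj : j % 2 ≠ m % 2) :
    zigzag m (n + 1) - zigzag m n ≠ -j := by
  rw [zigzag_succ_sub h]; split_ifs <;> omega

end zigzag

lemma isGdlOn_zigzag {k : ℕ} (hk : 0 < k) (h4 : k % 4 = 1 ∨ k % 4 = 2) :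
    IsGdlOn (circuitArcs k hk) fun i => zigzag k i := by
  refine isGdlOn_circuitArcs_of_injective hk _ (fun i => zigzag_mem i.isLt)
    (fun i j h => Fin.ext (zigzag_injOn k i.isLt j.isLt h))
    (injective_cyclic_sub_of hk _ (zigzag_succ_sub_injOn k) fun n hn => ?_)
  rw [zigzag_zero, zigzag_pred hk, sub_add_cancel_right]
  exact zigzag_succ_sub_ne_neg (by omega) (by omega)

def hookedZigzag (k n : ℕ) : ℤ :=
  if n < k - 4 then zigzag (k - 4) n + 2
  else if n = k - 4 then 2 else if n = k - 3 then (k : ℤ) - 1 else if n = k - 2 then 1 else k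

section hookedZigzag

variable {k n : ℕ}

lemma hookedZigzag_mem (hk : 4 ≤ k) (hn : n < k) : hookedZigzag k n ∈ Icc 1 (k : ℤ) := by
  unfold hookedZigzag zigzag; constructor <;> split_ifs <;> omega

lemma hookedZigzag_injOn (hk : 4 ≤ k) : InjOn (hookedZigzag k) (Iio k) := by
  intro n hn n' hn' h
  simp only [mem_Iio, hookedZigzag, zigzag] at *
  split_ifs at h <;> omega

lemma hookedZigzag_succ_sub (hk : 5 ≤ k) (h : n + 1 < k) :
    hookedZigzag k (n + 1) - hookedZigzag k n =
      if n + 5 < k then (if n % 2 = 0 then (k : ℤ) - 5 - n else (n : ℤ) + 5 - k)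
      else if n + 5 = k then -((k - 4) / 2 : ℕ) - 1
      else if n + 4 = k then (k : ℤ) - 3
      else if n + 3 = k then 2 - (k : ℤ)
      else (k : ℤ) - 1 := by
  rcases (by omega : n + 5 < k ∨ k = n + 5 ∨ k = n + 4 ∨ k = n + 3 ∨ k = n + 2)
    with hn | rfl | rfl | rfl | rfl
  · have := zigzag_succ_sub (m := k - 4) (n := n) (by omega)
    simp only [hookedZigzag, if_pos hn, if_pos (by omega : n < k - 4),
      if_pos (by omega : n + 1 < k - 4)]
    split_ifs at this ⊢ <;> omega
  · have hlast : zigzag (n + 1) n = ((n + 1) / 2 : ℕ) + 1 := zigzag_pred (m := n + 1) (by omega)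
    simp only [hookedZigzag, show n + 5 - 4 = n + 1 by omega, hlast]
    split_ifs <;> omega
  all_goals
    simp only [hookedZigzag]
    split_ifs <;> omega

lemma hookedZigzag_succ_sub_injOn (hk : 7 ≤ k) (h4 : k % 4 = 0 ∨ k % 4 = 3) :
    InjOn (fun n => hookedZigzag k (n + 1) - hookedZigzag k n) (Iio (k - 1)) := by
  intro n hn n' hn' h
  simp only [mem_Iio] at hn hn'
  simp only [hookedZigzag_succ_sub (by omega : 5 ≤ k) (show n + 1 < k by omega),
    hookedZigzag_succ_sub (by omega : 5 ≤ k) (show n' + 1 < k by omega)] at h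
  split_ifs at h <;> omega

lemma isGdlOn_hookedZigzag (hk : 7 ≤ k) (h4 : k % 4 = 0 ∨ k % 4 = 3) :
    IsGdlOn (circuitArcs k (by omega)) fun i => hookedZigzag k i := by
  refine isGdlOn_circuitArcs_of_injective _ _ (fun i => hookedZigzag_mem (by omega) i.isLt)
    (fun i j h => Fin.ext (hookedZigzag_injOn (by omega) i.isLt j.isLt h))
    (injective_cyclic_sub_of _ _ (hookedZigzag_succ_sub_injOn hk h4) fun n hn => ?_)
  have hfirst : hookedZigzag k 0 = 3 := by
    rw [hookedZigzag, if_pos (by omega), zigzag_zero]; norm_num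
  have hlast : hookedZigzag k (k - 1) = k := by
    simp only [hookedZigzag]; split_ifs <;> omega
  rw [hfirst, hlast, hookedZigzag_succ_sub (by omega) (by omega)]
  split_ifs <;> omega

end hookedZigzag

/-- For every `k ≥ 4`, the directed circuit `C_k` has a graceful difference labeling. -/
theorem stmt_4 (k : ℕ) (hk : 4 ≤ k) :
    ∃ f : Fin k → ℤ, IsGdlOn (circuitArcs k (by omega)) f := by
  rcases (by omega : k % 4 = 1 ∨ k % 4 = 2 ∨ k = 4 ∨ (7 ≤ k ∧ (k % 4 = 0 ∨ k % 4 = 3)))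
    with h4 | h4 | rfl | ⟨hk7, h4⟩
  · exact ⟨_, isGdlOn_zigzag _ (.inl h4)⟩
  · exact ⟨_, isGdlOn_zigzag _ (.inr h4)⟩
  · exact ⟨![1, 2, 4, 3], isGdlOn_circuitArcs_of_injective four_pos _
      (by decide) (by decide) (by decide)⟩
  · exact ⟨_, isGdlOn_hookedZigzag hk7 h4⟩
end

section
/- For k = 4p with p ≥ 1, the map f on the circuit C_{4p} defined by f(v_{2i+1}) = i+1 for 0 ≤ i ≤ 2p-2, f(v_{2i}) = 4p+1-i for 1 ≤ i ≤ 2p-2, f(v_{4p-2}) = 2p+1, f(v_{4p-1}) = 2p+2, f(v_{4p}) = 2p, is a bijection onto {1,...,4p} and is a graceful difference labeling of C_{4p}. -/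
/-- The labeling of `C_{4p}` from Lemma 1, case `k = 4p`.
Vertex `v_{j+1}` is the index `j : Fin (4p)`:
`f(v_{2i+1}) = i+1` for `0 ≤ i ≤ 2p-2`, `f(v_{2i}) = 4p+1-i` for `1 ≤ i ≤ 2p-2`,
`f(v_{4p-2}) = 2p+1`, `f(v_{4p-1}) = 2p+2`, `f(v_{4p}) = 2p`. -/
def f6 (p : ℕ) (j : Fin (4 * p)) : ℤ :=
  if j.val = 4 * p - 3 then 2 * p + 1
  else if j.val = 4 * p - 2 then 2 * p + 2
  else if j.val = 4 * p - 1 then 2 * p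
  else if j.val % 2 = 0 then (j.val / 2 : ℕ) + 1
  else 4 * (p : ℤ) + 1 - ((j.val + 1) / 2 : ℕ)

/-- Division-by-two data for a natural number. -/
lemma div2_data (n : ℕ) : ∃ m r, r < 2 ∧ n = 2*m + r ∧ n/2 = m ∧ (n+1)/2 = m + r
    ∧ (n+1+1)/2 = m+1 :=
  ⟨n/2, n % 2, by omega, by omega, by omega, by omega, by omega⟩

/-- Closed form of the arc difference of `f6`. -/
def d6 (p : ℕ) (n : ℕ) : ℤ :=
  if n = 4*p-4 then 2
  else if n = 4*p-3 then 1
  else if n = 4*p-2 then -2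
  else if n = 4*p-1 then 1 - 2*(p:ℤ)
  else if n % 2 = 0 then 4*(p:ℤ) - n - 1
  else (n:ℤ) + 1 - 4*p

set_option maxHeartbeats 1000000 in
lemma f6_diff (p : ℕ) (hp : 1 ≤ p) (h4 : 0 < 4*p) (i : Fin (4*p)) :
    f6 p (cyc (4*p) h4 i) - f6 p i = d6 p i.val := by
  have hi := i.isLt
  obtain ⟨m, r, hr, hmr, e1, e2, e3⟩ := div2_data i.val
  by_cases hc : i.val + 1 = 4*p
  · have hm : (i.val + 1) % (4*p) = 0 := by rw [hc]; exact Nat.mod_self _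
    simp only [cyc, f6, d6, hm]
    rw [e1, e2]
    split_ifs <;> omega
  · have hm : (i.val + 1) % (4*p) = i.val + 1 := Nat.mod_eq_of_lt (by omega)
    simp only [cyc, f6, d6, hm]
    rw [e1, e2, e3]
    split_ifs <;> omega

lemma d6_inj (p : ℕ) (hp : 1 ≤ p) {m n : ℕ} (hm : m < 4*p) (hn : n < 4*p)
    (h : d6 p m = d6 p n) : m = n := by
  simp only [d6] at h
  split_ifs at h <;> omega

/-- For `p ≥ 1`, `f6 p` is a bijection onto `{1,…,4p}` and a graceful difference
labeling of `C_{4p}`. -/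
theorem stmt_6 (p : ℕ) (hp : 1 ≤ p) :
    IsGdlOn (circuitArcs (4 * p) (by omega)) (f6 p) := by
  constructor
  · refine ⟨?_, ?_, ?_⟩
    · intro j _
      have hj := j.isLt
      obtain ⟨m, r, hr, hmr, e1, e2, e3⟩ := div2_data j.val
      simp only [f6, Set.mem_Icc, Fintype.card_fin]
      rw [e1, e2]
      split_ifs <;> omega
    · intro a _ b _ h
      have ha := a.isLt
      have hb := b.isLt
      obtain ⟨m, r, hr, hmr, e1, e2, e3⟩ := div2_data a.val
      obtain ⟨m', r', hr', hmr', e1', e2', e3'⟩ := div2_data b.val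
      simp only [f6] at h
      rw [e1, e2, e1', e2'] at h
      apply Fin.ext
      split_ifs at h <;> omega
    · intro y hy
      simp only [Set.mem_Icc, Fintype.card_fin] at hy
      by_cases h1 : y = 2*p
      · refine ⟨⟨4*p-1, by omega⟩, Set.mem_univ _, ?_⟩
        obtain ⟨m, r, hr, hmr, e1, e2, e3⟩ := div2_data (4*p-1)
        simp only [f6]
        rw [e1, e2]
        split_ifs <;> omega
      by_cases h2 : y = 2*(p:ℤ)+1
      · refine ⟨⟨4*p-3, by omega⟩, Set.mem_univ _, ?_⟩
        obtain ⟨m, r, hr, hmr, e1, e2, e3⟩ := div2_data (4*p-3)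
        simp only [f6]
        rw [e1, e2]
        split_ifs <;> omega
      by_cases h3 : y = 2*(p:ℤ)+2
      · refine ⟨⟨4*p-2, by omega⟩, Set.mem_univ _, ?_⟩
        obtain ⟨m, r, hr, hmr, e1, e2, e3⟩ := div2_data (4*p-2)
        simp only [f6]
        rw [e1, e2]
        split_ifs <;> omega
      by_cases h4 : y ≤ 2*(p:ℤ)-1
      · refine ⟨⟨2*(y.toNat-1), by omega⟩, Set.mem_univ _, ?_⟩
        obtain ⟨m, r, hr, hmr, e1, e2, e3⟩ := div2_data (2*(y.toNat-1))
        simp only [f6]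
        rw [e1, e2]
        split_ifs <;> omega
      · refine ⟨⟨8*p+1-2*y.toNat, by omega⟩, Set.mem_univ _, ?_⟩
        obtain ⟨m, r, hr, hmr, e1, e2, e3⟩ := div2_data (8*p+1-2*y.toNat)
        simp only [f6]
        rw [e1, e2]
        split_ifs <;> omega
  · rintro a ⟨i, rfl⟩ b ⟨j, rfl⟩ h
    simp only [f6_diff p hp] at h
    have hij : i = j := Fin.ext (d6_inj p hp i.isLt j.isLt h)
    rw [hij]
end

section
/- For k = 4p+1 with p ≥ 1, the map f defined by f(v_{2i+1}) = i+1 for 0 ≤ i ≤ 2p and f(v_{2i}) = 4p+2-i for 1 ≤ i ≤ 2p is a bijection onto {1,...,4p+1} and is a graceful difference labeling of the circuit C_{4p+1}, with exactly one arc of magnitude 1. -/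
/-- The labeling of `C_{4p+1}` from Lemma 1, case `k = 4p+1`.
Vertex `v_{j+1}` is the index `j : Fin (4p+1)`:
`f(v_{2i+1}) = i+1` for `0 ≤ i ≤ 2p`, `f(v_{2i}) = 4p+2-i` for `1 ≤ i ≤ 2p`. -/
def f7 (p : ℕ) (j : Fin (4 * p + 1)) : ℤ :=
  if j.val % 2 = 0 then (j.val / 2 : ℕ) + 1
  else 4 * (p : ℤ) + 2 - ((j.val + 1) / 2 : ℕ)

lemma f7_key (p : ℕ) (i : Fin (4 * p + 1)) :
    f7 p (cyc (4 * p + 1) (by omega) i) - f7 p i =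
      if i.val = 4 * p then -(2 * (p : ℤ))
      else if i.val % 2 = 0 then 4 * (p : ℤ) - i.val
      else (i.val : ℤ) - 4 * (p : ℤ) := by
  have hi := i.isLt
  have hmod : (i.val + 1) % (4 * p + 1) = if i.val = 4 * p then 0 else i.val + 1 := by
    split_ifs with h
    · rw [h, Nat.mod_self]
    · exact Nat.mod_eq_of_lt (by omega)
  simp only [f7, cyc, hmod]
  split_ifs <;> omega

/-- For `p ≥ 1`, `f7 p` is a bijection onto `{1,…,4p+1}` and a graceful difference
labeling of `C_{4p+1}`, with exactly one arc of magnitude 1. -/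
theorem stmt_7 (p : ℕ) (hp : 1 ≤ p) :
    IsGdlOn (circuitArcs (4 * p + 1) (by omega)) (f7 p) ∧
    ∃! i : Fin (4 * p + 1), |f7 p (cyc (4 * p + 1) (by omega) i) - f7 p i| = 1 := by
  have hcard : (Fintype.card (Fin (4 * p + 1)) : ℤ) = 4 * (p : ℤ) + 1 := by
    simp
  constructor
  · constructor
    · refine ⟨?_, ?_, ?_⟩
      · intro j _
        rw [Set.mem_Icc, hcard]
        have hj := j.isLt
        unfold f7
        split_ifs <;> constructor <;> omega
      · intro a _ b _ hab
        have ha := a.isLt; have hb := b.isLt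
        unfold f7 at hab
        apply Fin.ext
        split_ifs at hab <;> omega
      · intro y hy
        rw [Set.mem_Icc, hcard] at hy
        by_cases h : y ≤ 2 * (p : ℤ) + 1
        · refine ⟨⟨2 * (y.toNat - 1), by omega⟩, Set.mem_univ _, ?_⟩
          unfold f7
          simp only
          rw [if_pos (by omega)]
          omega
        · refine ⟨⟨8 * p + 3 - 2 * y.toNat, by omega⟩, Set.mem_univ _, ?_⟩
          unfold f7
          simp only
          rw [if_neg (by omega)]
          omega
    · rintro a ⟨i₁, rfl⟩ b ⟨i₂, rfl⟩ hab
      simp only at hab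
      have h1 := f7_key p i₁
      have h2 := f7_key p i₂
      rw [h1, h2] at hab
      have hi1 := i₁.isLt; have hi2 := i₂.isLt
      have : i₁ = i₂ := by
        apply Fin.ext
        split_ifs at hab <;> omega
      rw [this]
  · refine ⟨⟨4 * p - 1, by omega⟩, ?_, ?_⟩
    · dsimp only
      rw [f7_key]
      rw [if_neg (by simp; omega), if_neg (by simp; omega)]
      simp only
      rw [abs_eq (by norm_num)]
      right; omega
    · intro j hj
      rw [f7_key] at hj
      have hjlt := j.isLt
      apply Fin.ext
      simp only
      rw [abs_eq (by norm_num)] at hj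
      split_ifs at hj <;> rcases hj with hj | hj <;> omega
end

section
/- For k = 4p+2 with p ≥ 0, the map f defined by f(v_{2i+1}) = i+1 for 0 ≤ i ≤ 2p and f(v_{2i}) = 4p+3-i for 1 ≤ i ≤ 2p+1 is a bijection onto {1,...,4p+2} and is a graceful difference labeling of the circuit C_{4p+2}. -/
/-- The labeling of `C_{4p+2}` from Lemma 1, case `k = 4p+2`.
Vertex `v_{j+1}` is the index `j : Fin (4p+2)`:
`f(v_{2i+1}) = i+1` for `0 ≤ i ≤ 2p`, `f(v_{2i}) = 4p+3-i` for `1 ≤ i ≤ 2p+1`. -/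
def f8 (p : ℕ) (j : Fin (4 * p + 2)) : ℤ :=
  if j.val % 2 = 0 then (j.val / 2 : ℕ) + 1
  else 4 * (p : ℤ) + 3 - ((j.val + 1) / 2 : ℕ)

open Set Function

theorem bijOn_Icc_card_of_injective {V : Type} [Fintype V] {f : V → ℤ} (hf : Injective f)
    (hmaps : ∀ v, f v ∈ Icc 1 (Fintype.card V : ℤ)) :
    BijOn f univ (Icc 1 (Fintype.card V : ℤ)) := by
  refine ⟨fun v _ => hmaps v, hf.injOn, ?_⟩
  have hsub : Finset.univ.image f ⊆ Finset.Icc 1 (Fintype.card V : ℤ) := by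
    simpa [Finset.subset_iff] using hmaps
  have hcard : (Finset.Icc 1 (Fintype.card V : ℤ)).card ≤ (Finset.univ.image f).card := by
    simp [Finset.card_image_of_injective _ hf]
  have himage := Finset.eq_of_subset_of_card_le hsub hcard
  intro y hy
  have hy' : y ∈ Finset.univ.image f := by simpa [himage] using hy
  simpa using hy'

theorem injOn_circuitArcs_of_injective {k : ℕ} {hk : 0 < k} {f : Fin k → ℤ}
    (h : Injective fun i => f (cyc k hk i) - f i) :
    InjOn (fun a : Fin k × Fin k => f a.2 - f a.1) (circuitArcs k hk) := by
  rintro _ ⟨i, rfl⟩ _ ⟨j, rfl⟩ hij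
  rw [h hij]

theorem f8_mem_Icc (p : ℕ) (j : Fin (4 * p + 2)) : f8 p j ∈ Icc 1 (4 * p + 2 : ℤ) := by
  have hj := j.isLt
  unfold f8
  split_ifs <;> constructor <;> push_cast <;> omega

theorem f8_injective (p : ℕ) : Injective (f8 p) := by
  intro a b h
  have ha := a.isLt
  have hb := b.isLt
  unfold f8 at h
  apply Fin.ext
  split_ifs at h <;> push_cast at h <;> omega

theorem f8_cyc_sub_f8 (p : ℕ) (hk : 0 < 4 * p + 2) (i : Fin (4 * p + 2)) :
    f8 p (cyc (4 * p + 2) hk i) - f8 p i =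
      if i.val % 2 = 0 then 4 * (p : ℤ) + 1 - i.val
      else if i.val = 4 * p + 1 then -(2 * (p : ℤ) + 1)
      else (i.val : ℤ) - 4 * p - 1 := by
  have hi := i.isLt
  have hsucc : (i.val + 1) % (4 * p + 2) = if i.val = 4 * p + 1 then 0 else i.val + 1 := by
    split_ifs with h
    · rw [h, Nat.mod_self]
    · exact Nat.mod_eq_of_lt (by omega)
  simp only [cyc, f8, hsucc]
  split_ifs <;> push_cast <;> omega

/- Even positions carry the odd positive labels `4p+1-i`, the other odd positions the even
negative labels `i-4p-1`, and the closing arc the odd negative label `-(2p+1)`. -/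
theorem f8_arcLabel_injective (p : ℕ) (hk : 0 < 4 * p + 2) :
    Injective fun i => f8 p (cyc (4 * p + 2) hk i) - f8 p i := by
  intro i j h
  have hi := i.isLt
  have hj := j.isLt
  simp only [f8_cyc_sub_f8] at h
  apply Fin.ext
  split_ifs at h <;> omega

/-- For `p ≥ 0`, `f8 p` is a bijection onto `{1,…,4p+2}` and a graceful difference
labeling of `C_{4p+2}`. -/
theorem stmt_8 (p : ℕ) :
    IsGdlOn (circuitArcs (4 * p + 2) (by omega)) (f8 p) := by
  refine ⟨bijOn_Icc_card_of_injective (f8_injective p) fun j => ?_,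
    injOn_circuitArcs_of_injective (f8_arcLabel_injective p _)⟩
  simpa using f8_mem_Icc p j
end

section
/- For k = 4p+3 with p ≥ 1, the map f defined by f(v_{2i+1}) = i+1 for 0 ≤ i ≤ 2p-1, f(v_{2i}) = 4p+4-i for 1 ≤ i ≤ 2p, f(v_{4p+1}) = 2p+2, f(v_{4p+2}) = 2p+1, f(v_{4p+3}) = 2p+3, is a bijection onto {1,...,4p+3} and is a graceful difference labeling of the circuit C_{4p+3}, with exactly one arc of magnitude 1. -/
/-- The labeling of `C_{4p+3}` from Lemma 1, case `k = 4p+3`.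
Vertex `v_{j+1}` is the index `j : Fin (4p+3)`:
`f(v_{2i+1}) = i+1` for `0 ≤ i ≤ 2p-1`, `f(v_{2i}) = 4p+4-i` for `1 ≤ i ≤ 2p`,
`f(v_{4p+1}) = 2p+2`, `f(v_{4p+2}) = 2p+1`, `f(v_{4p+3}) = 2p+3`. -/
def f9 (p : ℕ) (j : Fin (4 * p + 3)) : ℤ :=
  if j.val = 4 * p then 2 * p + 2
  else if j.val = 4 * p + 1 then 2 * p + 1
  else if j.val = 4 * p + 2 then 2 * p + 3
  else if j.val % 2 = 0 then (j.val / 2 : ℕ) + 1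
  else 4 * (p : ℤ) + 4 - ((j.val + 1) / 2 : ℕ)

/-- Closed form for the arc labels of the labeling `f9`. -/
lemma D_eq9 (p : ℕ) (hp : 1 ≤ p) (hk : 0 < 4*p+3) (i : Fin (4*p+3)) :
    f9 p (cyc (4*p+3) hk i) - f9 p i =
    if i.val = 4*p+2 then -(2*(p:ℤ)+2)
    else if i.val = 4*p then -1
    else if i.val = 4*p+1 then 2
    else if i.val = 4*p-1 then -2
    else if i.val % 2 = 0 then 4*(p:ℤ)+2 - i.val
    else (i.val:ℤ) - 4*p - 2 := by
  have hi := i.isLt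
  rcases eq_or_ne i.val (4*p+2) with h2 | h2
  · have hc : (cyc (4*p+3) hk i).val = 0 := by
      simp only [cyc, h2]
      rw [show 4*p+2+1 = 4*p+3 by omega, Nat.mod_self]
    simp only [f9, hc, h2]
    split_ifs <;> push_cast <;> first | omega | exact ‹False›.elim
  · have hc : (cyc (4*p+3) hk i).val = i.val + 1 := by
      simp only [cyc]
      exact Nat.mod_eq_of_lt (by omega)
    simp only [f9, hc]
    split_ifs <;> push_cast <;> first | omega | exact ‹False›.elim

/-- For `p ≥ 1`, `f9 p` is a bijection onto `{1,…,4p+3}` and a graceful difference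
labeling of `C_{4p+3}`, with exactly one arc of magnitude 1. -/
theorem stmt_9 (p : ℕ) (hp : 1 ≤ p) :
    IsGdlOn (circuitArcs (4 * p + 3) (by omega)) (f9 p) ∧
    ∃! i : Fin (4 * p + 3), |f9 p (cyc (4 * p + 3) (by omega) i) - f9 p i| = 1 := by
  have hk : 0 < 4*p+3 := by omega
  have hinj : Set.InjOn (f9 p) Set.univ := by
    intro a _ b _ h
    have ha := a.isLt; have hb := b.isLt
    simp only [f9] at h
    apply Fin.ext
    split_ifs at h <;> omega
  have hmaps : Set.MapsTo (f9 p) Set.univ (Set.Icc 1 ((4*p+3 : ℕ) : ℤ)) := by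
    intro j _
    have hj := j.isLt
    simp only [f9, Set.mem_Icc]
    split_ifs <;> constructor <;> push_cast <;> omega
  have himg : f9 p '' Set.univ = Set.Icc 1 ((4*p+3 : ℕ) : ℤ) := by
    apply Set.eq_of_subset_of_ncard_le (Set.image_subset_iff.2 hmaps)
    · have h1 : (Set.Icc (1:ℤ) ((4*p+3 : ℕ) : ℤ)).ncard = 4*p+3 := by
        rw [← Finset.coe_Icc, Set.ncard_coe_finset, Int.card_Icc]
        push_cast; omega
      have h2 : (f9 p '' Set.univ).ncard = 4*p+3 := by
        rw [Set.ncard_image_of_injOn hinj, Set.ncard_univ, Nat.card_eq_fintype_card,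
          Fintype.card_fin]
      omega
  refine ⟨⟨?_, ?_⟩, ⟨4*p, by omega⟩, ?_, ?_⟩
  · -- BijOn
    have := hinj.bijOn_image (f := f9 p)
    rw [himg] at this
    simpa [Fintype.card_fin] using this
  · -- arc label injectivity
    rintro a ⟨i, rfl⟩ b ⟨j, rfl⟩ h
    simp only at h
    rw [D_eq9 p hp hk i, D_eq9 p hp hk j] at h
    have hi := i.isLt; have hj := j.isLt
    have : i = j := by
      apply Fin.ext
      split_ifs at h <;> omega
    rw [this]
  · -- the arc of magnitude 1
    show |f9 p (cyc (4*p+3) hk ⟨4*p, by omega⟩) - f9 p ⟨4*p, by omega⟩| = 1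
    rw [D_eq9 p hp hk ⟨4*p, by omega⟩]
    simp only [Fin.val_mk]
    rw [if_neg (by omega), if_pos trivial]
    norm_num
  · -- uniqueness
    intro j hj
    rw [D_eq9 p hp hk j, abs_eq (by norm_num : (0:ℤ) ≤ 1)] at hj
    have hjlt := j.isLt
    apply Fin.ext
    simp only [Fin.val_mk]  -- value of ⟨4*p, _⟩
    split_ifs at hj <;> rcases hj with hj | hj <;>
      first | omega | exact hj.elim
end

section
/- If a directed graph G has a graceful difference labeling, then the disjoint union G + 2C4 (G together with two vertex-disjoint directed 4-circuits) also has a graceful difference labeling. -/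
/-- Labels for the 8 circuit vertices. -/
def lab (n : ℤ) (i : Fin 8) : ℤ :=
  if i = 0 then 1 else if i = 1 then n+8 else if i = 2 then 2 else if i = 3 then n+6
  else if i = 4 then 4 else if i = 5 then n+7 else if i = 6 then 3 else n+5

lemma lab_inj (n : ℤ) (hn : 0 ≤ n) : Function.Injective (lab n) := by
  intro i j hij
  fin_cases i <;> fin_cases j <;> simp [lab, Fin.ext_iff] at hij ⊢ <;> omega


/-- If `G` has a gdl, then the disjoint union `G + 2C4` also has a gdl.
The two 4-circuits live on `Fin 8`: `0→1→2→3→0` and `4→5→6→7→4`. -/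
theorem stmt_10 (V : Type) [Fintype V] (A : Set (V × V))
    (h : ∃ f : V → ℤ, IsGdlOn A f) :
    ∃ g : V ⊕ Fin 8 → ℤ,
      IsGdlOn
        ((fun a : V × V => ((Sum.inl a.1 : V ⊕ Fin 8), (Sum.inl a.2 : V ⊕ Fin 8))) '' A ∪
          ({(Sum.inr 0, Sum.inr 1), (Sum.inr 1, Sum.inr 2), (Sum.inr 2, Sum.inr 3),
            (Sum.inr 3, Sum.inr 0), (Sum.inr 4, Sum.inr 5), (Sum.inr 5, Sum.inr 6),
            (Sum.inr 6, Sum.inr 7), (Sum.inr 7, Sum.inr 4)} :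
            Set ((V ⊕ Fin 8) × (V ⊕ Fin 8)))) g := by
  obtain ⟨f, hbij, hinj⟩ := h
  set n : ℤ := (Fintype.card V : ℤ) with hn
  have hn0 : 0 ≤ n := Int.natCast_nonneg _
  have hmem : ∀ v : V, 1 ≤ f v ∧ f v ≤ n := fun v => hbij.mapsTo (Set.mem_univ v)
  have hfinj : Function.Injective f := fun a b hab =>
    hbij.injOn (Set.mem_univ a) (Set.mem_univ b) hab
  have hcard : (Fintype.card (V ⊕ Fin 8) : ℤ) = n + 8 := by
    simp [Fintype.card_sum, hn]
  refine ⟨Sum.elim (fun v => f v + 4) (lab n), ?_, ?_⟩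
  · rw [hcard]
    refine ⟨?_, ?_, ?_⟩
    · rintro (v | i) -
      · have := hmem v
        simp only [Sum.elim_inl, Set.mem_Icc]; omega
      · fin_cases i <;> simp [lab, Fin.ext_iff] <;> omega
    · rintro (v | i) - (w | j) - hab
      · simp only [Sum.elim_inl] at hab
        exact congrArg Sum.inl (hfinj (by omega))
      · exfalso; have := hmem v
        fin_cases j <;> simp [lab, Fin.ext_iff] at hab <;> omega
      · exfalso; have := hmem w
        fin_cases i <;> simp [lab, Fin.ext_iff] at hab <;> omega
      · simp only [Sum.elim_inr] at hab
        exact congrArg Sum.inr (lab_inj n hn0 hab)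
    · intro m hm
      simp only [Set.mem_Icc] at hm
      by_cases hmid : 5 ≤ m ∧ m ≤ n + 4
      · obtain ⟨v, -, hv⟩ := hbij.surjOn (Set.mem_Icc.mpr ⟨by omega, by omega⟩ :
          m - 4 ∈ Set.Icc 1 n)
        exact ⟨Sum.inl v, Set.mem_univ _, by simp only [Sum.elim_inl]; omega⟩
      · have : m = 1 ∨ m = 2 ∨ m = 3 ∨ m = 4 ∨ m = n+5 ∨ m = n+6 ∨ m = n+7 ∨ m = n+8 := by
          omega
        rcases this with rfl | rfl | rfl | rfl | rfl | rfl | rfl | rfl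
        · exact ⟨Sum.inr 0, Set.mem_univ _, rfl⟩
        · exact ⟨Sum.inr 2, Set.mem_univ _, rfl⟩
        · exact ⟨Sum.inr 6, Set.mem_univ _, rfl⟩
        · exact ⟨Sum.inr 4, Set.mem_univ _, rfl⟩
        · exact ⟨Sum.inr 7, Set.mem_univ _, rfl⟩
        · exact ⟨Sum.inr 3, Set.mem_univ _, rfl⟩
        · exact ⟨Sum.inr 5, Set.mem_univ _, rfl⟩
        · exact ⟨Sum.inr 1, Set.mem_univ _, rfl⟩
  · intro a ha b hb hab
    simp only [Set.mem_union, Set.mem_image, Set.mem_insert_iff, Set.mem_singleton_iff]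
      at ha hb
    rcases ha with ⟨x, hx, rfl⟩ | ha <;> rcases hb with ⟨y, hy, rfl⟩ | hb
    · simp only [Sum.elim_inl] at hab
      have : x = y := hinj hx hy (by simpa using hab)
      rw [this]
    · exfalso
      have h1 := hmem x.1; have h2 := hmem x.2
      rcases hb with rfl | rfl | rfl | rfl | rfl | rfl | rfl | rfl <;>
        simp only [Sum.elim_inl, Sum.elim_inr, lab] at hab <;> norm_num at hab <;> omega
    · exfalso
      have h1 := hmem y.1; have h2 := hmem y.2
      rcases ha with rfl | rfl | rfl | rfl | rfl | rfl | rfl | rfl <;>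
        simp only [Sum.elim_inl, Sum.elim_inr, lab] at hab <;> norm_num at hab <;> omega
    · rcases ha with rfl | rfl | rfl | rfl | rfl | rfl | rfl | rfl <;>
        rcases hb with rfl | rfl | rfl | rfl | rfl | rfl | rfl | rfl <;>
        simp only [Sum.elim_inr, lab] at hab <;> norm_num at hab <;>
        first
        | rfl
        | (exfalso; omega)
end

section
/- For every k ≥ 1 with k ≠ 2: if a directed graph G has a graceful difference labeling, then the disjoint union G + C_{2k} also has a graceful difference labeling. -/
/-- Auxiliary permutation of `{1,…,k}` used to label the "high" circuit vertices. -/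
def Uperm (k i : ℕ) : ℤ :=
  if 2 * i ≤ k + k % 2 then (2 * i : ℤ) - (k % 2 : ℕ) else (2 * i : ℤ) - (k : ℤ) - 1

lemma Uperm_mem {k i : ℕ} (h1 : 1 ≤ i) (h2 : i ≤ k) : 1 ≤ Uperm k i ∧ Uperm k i ≤ k := by
  unfold Uperm; split_ifs <;> push_cast <;> omega

lemma Uperm_inj {k i j : ℕ} (hi1 : 1 ≤ i) (hi2 : i ≤ k) (hj1 : 1 ≤ j) (hj2 : j ≤ k)
    (h : Uperm k i = Uperm k j) : i = j := by
  unfold Uperm at h; split_ifs at h <;> push_cast at h <;> omega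

lemma Uperm_sub_inj {k i j : ℕ} (hi1 : 1 ≤ i) (hi2 : i ≤ k) (hj1 : 1 ≤ j) (hj2 : j ≤ k)
    (h : Uperm k i - i = Uperm k j - j) : i = j := by
  unfold Uperm at h; split_ifs at h <;> push_cast at h <;> omega

lemma Uperm_wrap_ne {k i : ℕ} (hk2 : k ≠ 2) (h1 : 1 ≤ i) (h2 : i < k) :
    Uperm k i - (i + 1 : ℤ) ≠ Uperm k k - 1 := by
  unfold Uperm; split_ifs <;> push_cast <;> omega

lemma Uperm_surj {k : ℕ} {w : ℤ} (h1 : 1 ≤ w) (h2 : w ≤ k) :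
    ∃ i : ℕ, 1 ≤ i ∧ i ≤ k ∧ Uperm k i = w := by
  refine ⟨if (w.toNat + k % 2) % 2 = 0 then (w.toNat + k % 2) / 2 else (w.toNat + k + 1) / 2, ?_⟩
  unfold Uperm; split_ifs <;> push_cast <;> omega

/-- Labels of the circuit vertices: even positions get low values `1..k`,
odd positions get high values `n+k+1..n+2k`. -/
def circLabel (n k j : ℕ) : ℤ :=
  if j % 2 = 0 then ((j / 2 + 1 : ℕ) : ℤ) else (n : ℤ) + k + Uperm k (j / 2 + 1)

lemma circLabel_low {n k j : ℕ} (hj : j < 2 * k) (he : j % 2 = 0) :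
    1 ≤ circLabel n k j ∧ circLabel n k j ≤ k := by
  unfold circLabel; rw [if_pos he]; omega

lemma circLabel_high {n k j : ℕ} (hj : j < 2 * k) (ho : j % 2 = 1) :
    (n : ℤ) + k + 1 ≤ circLabel n k j ∧ circLabel n k j ≤ (n : ℤ) + 2 * k := by
  unfold circLabel; rw [if_neg (by omega)]
  have := Uperm_mem (k := k) (i := j / 2 + 1) (by omega) (by omega)
  constructor <;> push_cast <;> omega

lemma circLabel_inj {n k j1 j2 : ℕ} (h1 : j1 < 2 * k) (h2 : j2 < 2 * k)
    (h : circLabel n k j1 = circLabel n k j2) : j1 = j2 := by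
  unfold circLabel at h
  split_ifs at h with p1 p2 p2
  · omega
  · have := Uperm_mem (k := k) (i := j2 / 2 + 1) (by omega) (by omega); omega
  · have := Uperm_mem (k := k) (i := j1 / 2 + 1) (by omega) (by omega); omega
  · have h' : Uperm k (j1 / 2 + 1) = Uperm k (j2 / 2 + 1) := by omega
    have := Uperm_inj (k := k) (i := j1 / 2 + 1) (j := j2 / 2 + 1)
      (by omega) (by omega) (by omega) (by omega) h'
    omega

/-- Difference along the circuit arc starting at position `j`. -/
def circD (n k j : ℕ) : ℤ := circLabel n k ((j + 1) % (2 * k)) - circLabel n k j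

lemma circD_even {n k j : ℕ} (hk : 1 ≤ k) (hj : j < 2 * k) (he : j % 2 = 0) :
    circD n k j = (n : ℤ) + k + Uperm k (j / 2 + 1) - ((j / 2 + 1 : ℕ) : ℤ) := by
  have hlt : j + 1 < 2 * k := by omega
  have hmod : (j + 1) % (2 * k) = j + 1 := Nat.mod_eq_of_lt hlt
  have hdiv : (j + 1) / 2 = j / 2 := by omega
  unfold circD circLabel
  rw [hmod, if_neg (by omega : ¬((j + 1) % 2 = 0)), if_pos he, hdiv]

lemma circD_odd {n k j : ℕ} (hk : 1 ≤ k) (hj : j < 2 * k) (ho : j % 2 = 1)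
    (hw : j ≠ 2 * k - 1) :
    circD n k j = ((j / 2 + 2 : ℕ) : ℤ) - ((n : ℤ) + k + Uperm k (j / 2 + 1)) := by
  have hlt : j + 1 < 2 * k := by omega
  have hmod : (j + 1) % (2 * k) = j + 1 := Nat.mod_eq_of_lt hlt
  have hdiv : (j + 1) / 2 = j / 2 + 1 := by omega
  unfold circD circLabel
  rw [hmod, if_pos (by omega : (j + 1) % 2 = 0), if_neg (by omega : ¬(j % 2 = 0)), hdiv]

lemma circD_wrap {n k : ℕ} (hk : 1 ≤ k) :
    circD n k (2 * k - 1) = 1 - ((n : ℤ) + k + Uperm k k) := by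
  have hmod : (2 * k - 1 + 1) % (2 * k) = 0 := by
    have : 2 * k - 1 + 1 = 2 * k := by omega
    rw [this, Nat.mod_self]
  have hdiv : (2 * k - 1) / 2 + 1 = k := by omega
  unfold circD circLabel
  rw [hmod, if_pos (by omega), if_neg (by omega), hdiv]
  norm_num

lemma circD_pos {n k j : ℕ} (hk : 1 ≤ k) (hj : j < 2 * k) (he : j % 2 = 0) :
    (n : ℤ) + 1 ≤ circD n k j := by
  rw [circD_even hk hj he]
  have := Uperm_mem (k := k) (i := j / 2 + 1) (by omega) (by omega)
  -- need Uperm k i - i ≥ 1 - k; from Uperm ≥ 1 and i ≤ k we only get ≥ 1 - k when i ≤ k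
  have hik : j / 2 + 1 ≤ k := by omega
  push_cast; omega

lemma circD_neg {n k j : ℕ} (hk : 1 ≤ k) (hj : j < 2 * k) (ho : j % 2 = 1) :
    circD n k j ≤ -((n : ℤ) + 1) := by
  by_cases hw : j = 2 * k - 1
  · subst hw; rw [circD_wrap hk]
    have := Uperm_mem (k := k) (i := k) hk le_rfl
    omega
  · rw [circD_odd hk hj ho hw]
    have := Uperm_mem (k := k) (i := j / 2 + 1) (by omega) (by omega)
    have hik : j / 2 + 2 ≤ k := by omega
    push_cast; omega

lemma circD_inj {n k j1 j2 : ℕ} (hk : 1 ≤ k) (hk2 : k ≠ 2) (h1 : j1 < 2 * k) (h2 : j2 < 2 * k)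
    (h : circD n k j1 = circD n k j2) : j1 = j2 := by
  rcases Nat.mod_two_eq_zero_or_one j1 with p1 | p1 <;>
    rcases Nat.mod_two_eq_zero_or_one j2 with p2 | p2
  · rw [circD_even hk h1 p1, circD_even hk h2 p2] at h
    have h' : Uperm k (j1 / 2 + 1) - ((j1 / 2 + 1 : ℕ) : ℤ)
        = Uperm k (j2 / 2 + 1) - ((j2 / 2 + 1 : ℕ) : ℤ) := by push_cast at h ⊢; omega
    have := Uperm_sub_inj (k := k) (i := j1 / 2 + 1) (j := j2 / 2 + 1)
      (by omega) (by omega) (by omega) (by omega) h'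
    omega
  · exfalso
    have hA := circD_pos (n := n) hk h1 p1
    have hB := circD_neg (n := n) hk h2 p2
    omega
  · exfalso
    have hA := circD_pos (n := n) hk h2 p2
    have hB := circD_neg (n := n) hk h1 p1
    omega
  · -- both odd
    by_cases hw1 : j1 = 2 * k - 1 <;> by_cases hw2 : j2 = 2 * k - 1
    · omega
    · exfalso
      subst hw1
      rw [circD_wrap hk, circD_odd hk h2 p2 hw2] at h
      have hne := Uperm_wrap_ne (k := k) (i := j2 / 2 + 1) hk2 (by omega) (by omega)
      apply hne; push_cast at h ⊢; omega
    · exfalso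
      subst hw2
      rw [circD_wrap hk, circD_odd hk h1 p1 hw1] at h
      have hne := Uperm_wrap_ne (k := k) (i := j1 / 2 + 1) hk2 (by omega) (by omega)
      apply hne; push_cast at h ⊢; omega
    · rw [circD_odd hk h1 p1 hw1, circD_odd hk h2 p2 hw2] at h
      have h' : Uperm k (j1 / 2 + 1) - ((j1 / 2 + 1 : ℕ) : ℤ)
          = Uperm k (j2 / 2 + 1) - ((j2 / 2 + 1 : ℕ) : ℤ) := by push_cast at h ⊢; omega
      have := Uperm_sub_inj (k := k) (i := j1 / 2 + 1) (j := j2 / 2 + 1)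
        (by omega) (by omega) (by omega) (by omega) h'
      omega

/-- For every `k ≥ 1`, `k ≠ 2`: if `G` has a gdl, then `G + C_{2k}` has a gdl. -/
theorem stmt_12 (k : ℕ) (hk1 : 1 ≤ k) (hk2 : k ≠ 2)
    (V : Type) [Fintype V] (A : Set (V × V))
    (h : ∃ f : V → ℤ, IsGdlOn A f) :
    ∃ g : V ⊕ Fin (2 * k) → ℤ,
      IsGdlOn
        ((fun a : V × V => ((Sum.inl a.1 : V ⊕ Fin (2 * k)), (Sum.inl a.2 : V ⊕ Fin (2 * k)))) '' A ∪
          Set.range (fun i : Fin (2 * k) =>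
            ((Sum.inr i : V ⊕ Fin (2 * k)), (Sum.inr (cyc (2 * k) (by omega) i) : V ⊕ Fin (2 * k))))) g := by
  classical
  obtain ⟨f, hfb, hfd⟩ := h
  set n := Fintype.card V with hn
  have hfv : ∀ v : V, 1 ≤ f v ∧ f v ≤ (n : ℤ) := by
    intro v
    have := hfb.mapsTo (Set.mem_univ v)
    simpa [Set.mem_Icc] using this
  refine ⟨Sum.elim (fun v => f v + k) (fun j : Fin (2 * k) => circLabel n k j.val), ?_, ?_⟩
  · -- BijOn
    have hcard : (Fintype.card (V ⊕ Fin (2 * k)) : ℤ) = (n : ℤ) + 2 * k := by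
      simp [Fintype.card_sum, Fintype.card_fin, hn]
      try push_cast
      try ring
    rw [hcard]
    refine ⟨?_, ?_, ?_⟩
    · -- MapsTo
      rintro (v | j) -
      · have := hfv v
        simp only [Sum.elim_inl, Set.mem_Icc]
        constructor <;> push_cast <;> omega
      · simp only [Sum.elim_inr, Set.mem_Icc]
        rcases Nat.mod_two_eq_zero_or_one j.val with hp | hp
        · have := circLabel_low (n := n) j.isLt hp; constructor <;> push_cast <;> omega
        · have := circLabel_high (n := n) j.isLt hp; constructor <;> push_cast <;> omega
    · -- InjOn
      rintro (v | i) - (w | j) - hvw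
      · simp only [Sum.elim_inl] at hvw
        have : f v = f w := by omega
        rw [hfb.injOn (Set.mem_univ v) (Set.mem_univ w) this]
      · exfalso
        simp only [Sum.elim_inl, Sum.elim_inr] at hvw
        have hfvv := hfv v
        rcases Nat.mod_two_eq_zero_or_one j.val with hp | hp
        · have := circLabel_low (n := n) j.isLt hp; omega
        · have := circLabel_high (n := n) j.isLt hp; omega
      · exfalso
        simp only [Sum.elim_inl, Sum.elim_inr] at hvw
        have hfvv := hfv w
        rcases Nat.mod_two_eq_zero_or_one i.val with hp | hp
        · have := circLabel_low (n := n) i.isLt hp; omega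
        · have := circLabel_high (n := n) i.isLt hp; omega
      · simp only [Sum.elim_inr] at hvw
        have := circLabel_inj (n := n) i.isLt j.isLt hvw
        exact congrArg Sum.inr (Fin.ext this)
    · -- SurjOn
      intro t ht
      simp only [Set.mem_Icc] at ht
      obtain ⟨ht1, ht2⟩ := ht
      by_cases hlo : t ≤ (k : ℤ)
      · refine ⟨Sum.inr ⟨2 * (t.toNat - 1), by omega⟩, Set.mem_univ _, ?_⟩
        simp only [Sum.elim_inr]
        unfold circLabel
        rw [if_pos (by omega)]
        push_cast; omega
      · by_cases hmid : t ≤ (n : ℤ) + k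
        · have : t - k ∈ Set.Icc 1 (n : ℤ) := Set.mem_Icc.mpr ⟨by omega, by omega⟩
          obtain ⟨v, -, hv⟩ := hfb.surjOn this
          exact ⟨Sum.inl v, Set.mem_univ _, by simp only [Sum.elim_inl]; omega⟩
        · obtain ⟨i, hi1, hi2, hiU⟩ := Uperm_surj (k := k) (w := t - n - k) (by omega) (by omega)
          refine ⟨Sum.inr ⟨2 * (i - 1) + 1, by omega⟩, Set.mem_univ _, ?_⟩
          simp only [Sum.elim_inr]
          unfold circLabel
          rw [if_neg (by omega)]
          have hdiv : (2 * (i - 1) + 1) / 2 + 1 = i := by omega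
          rw [hdiv]
          omega
  · -- InjOn of differences
    intro p hp q hq hpq
    have hDp : ∀ j : Fin (2 * k),
        Sum.elim (fun v => f v + (k : ℤ)) (fun j : Fin (2 * k) => circLabel n k j.val)
            (Sum.inr (cyc (2 * k) (by omega) j))
          - Sum.elim (fun v => f v + (k : ℤ)) (fun j : Fin (2 * k) => circLabel n k j.val)
            (Sum.inr j) = circD n k j.val := fun j => rfl
    rcases hp with ⟨a, ha, rfl⟩ | ⟨i, rfl⟩ <;> rcases hq with ⟨b, hb, rfl⟩ | ⟨j, rfl⟩
    · simp only [Sum.elim_inl] at hpq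
      have : f a.2 - f a.1 = f b.2 - f b.1 := by omega
      rw [hfd ha hb this]
    · exfalso
      simp only at hpq
      rw [hDp j] at hpq
      simp only [Sum.elim_inl] at hpq
      have h1 := hfv a.1
      have h2 := hfv a.2
      rcases Nat.mod_two_eq_zero_or_one j.val with hpar | hpar
      · have := circD_pos (n := n) hk1 j.isLt hpar; omega
      · have := circD_neg (n := n) hk1 j.isLt hpar; omega
    · exfalso
      simp only at hpq
      rw [hDp i] at hpq
      simp only [Sum.elim_inl] at hpq
      have h1 := hfv b.1
      have h2 := hfv b.2
      rcases Nat.mod_two_eq_zero_or_one i.val with hpar | hpar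
      · have := circD_pos (n := n) hk1 i.isLt hpar; omega
      · have := circD_neg (n := n) hk1 i.isLt hpar; omega
    · simp only at hpq
      rw [hDp i, hDp j] at hpq
      have := circD_inj (n := n) hk1 hk2 i.isLt j.isLt hpq
      have hij : i = j := Fin.ext this
      subst hij; rfl
end

section
/- For every k ≥ 1, the disjoint union C4 + C_{2k+1} of a directed 4-circuit and a directed circuit of odd length 2k+1 has a graceful difference labeling. -/
set_option maxHeartbeats 1000000

/-! ### Auxiliary constructions -/

/-- Labels of the 4-circuit. -/
def c4F (k i : ℕ) : ℕ :=
  if k = 1 then (if i = 0 then 1 else if i = 1 then 3 else if i = 2 then 4 else 7)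
  else if k = 2 then (if i = 0 then 1 else if i = 1 then 2 else if i = 2 then 5 else 7)
  else k + 2 + (if i = 0 then 0 else if i = 1 then 2 else if i = 2 then 3 else 1)

/-- Labels of the odd circuit. -/
def bigF (k j : ℕ) : ℕ :=
  if k = 1 then (if j = 0 then 2 else if j = 1 then 6 else 5)
  else if k = 2 then
    (if j = 0 then 3 else if j = 1 then 9 else if j = 2 then 4 else if j = 3 then 8 else 6)
  else if j % 2 = 1 then 2 * k + 5 - (j - 1) / 2
  else 1 + (if k % 2 = 0 ∨ k = 3 then j / 2
            else if j = 0 then 0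
            else if j / 2 + 4 ≤ k then j / 2 + 4
            else j / 2 + 4 - k)

/-- Case split on `k` used throughout. -/
lemma k_cases (k : ℕ) (hk : 1 ≤ k) :
    k = 1 ∨ k = 2 ∨ (3 ≤ k ∧ (k % 2 = 0 ∨ k = 3)) ∨ (3 ≤ k ∧ k % 2 = 1 ∧ k ≠ 3) := by
  omega

lemma c4F_spec1 (i : ℕ) (hi : i ≤ 3) :
    (i = 0 ∧ c4F 1 i = 1) ∨ (i = 1 ∧ c4F 1 i = 3) ∨ (i = 2 ∧ c4F 1 i = 4) ∨
      (i = 3 ∧ c4F 1 i = 7) := by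
  unfold c4F; split_ifs <;> omega

lemma c4F_spec2 (i : ℕ) (hi : i ≤ 3) :
    (i = 0 ∧ c4F 2 i = 1) ∨ (i = 1 ∧ c4F 2 i = 2) ∨ (i = 2 ∧ c4F 2 i = 5) ∨
      (i = 3 ∧ c4F 2 i = 7) := by
  unfold c4F; split_ifs <;> omega

lemma c4F_spec3 (k i : ℕ) (hk : 3 ≤ k) (hi : i ≤ 3) :
    (i = 0 ∧ c4F k i = k + 2) ∨ (i = 1 ∧ c4F k i = k + 4) ∨
      (i = 2 ∧ c4F k i = k + 5) ∨ (i = 3 ∧ c4F k i = k + 3) := by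
  unfold c4F; split_ifs <;> omega

lemma bigF_spec1 (j : ℕ) (hj : j ≤ 2) :
    (j = 0 ∧ bigF 1 j = 2) ∨ (j = 1 ∧ bigF 1 j = 6) ∨ (j = 2 ∧ bigF 1 j = 5) := by
  unfold bigF; split_ifs <;> omega

lemma bigF_spec2 (j : ℕ) (hj : j ≤ 4) :
    (j = 0 ∧ bigF 2 j = 3) ∨ (j = 1 ∧ bigF 2 j = 9) ∨ (j = 2 ∧ bigF 2 j = 4) ∨
      (j = 3 ∧ bigF 2 j = 8) ∨ (j = 4 ∧ bigF 2 j = 6) := by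
  unfold bigF; split_ifs <;> omega

lemma bigF_spec3 (k j : ℕ) (hk : 3 ≤ k) (hke : k % 2 = 0 ∨ k = 3) (hj : j ≤ 2 * k) :
    (j % 2 = 1 ∧ bigF k j = 2 * k + 5 - (j - 1) / 2) ∨
    (j % 2 = 0 ∧ bigF k j = 1 + j / 2) := by
  unfold bigF; split_ifs <;> omega

lemma bigF_spec4 (k j : ℕ) (hk : 3 ≤ k) (hko : k % 2 = 1) (hk3 : k ≠ 3) (hj : j ≤ 2 * k) :
    (j % 2 = 1 ∧ bigF k j = 2 * k + 5 - (j - 1) / 2) ∨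
    (j = 0 ∧ bigF k j = 1) ∨
    (j % 2 = 0 ∧ 2 ≤ j ∧ j / 2 + 4 ≤ k ∧ bigF k j = j / 2 + 5) ∨
    (j % 2 = 0 ∧ 2 ≤ j ∧ k < j / 2 + 4 ∧ bigF k j = j / 2 + 5 - k) := by
  unfold bigF; split_ifs <;> omega

lemma bigF_spec3' (k j : ℕ) (hk : 3 ≤ k) (hke : k % 2 = 0 ∨ k = 3) (hj : j ≤ 2 * k) :
    ∃ m, (j = 2 * m + 1 ∧ bigF k j + m = 2 * k + 5) ∨ (j = 2 * m ∧ bigF k j = 1 + m) := by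
  refine ⟨j / 2, ?_⟩
  have := bigF_spec3 k j hk hke hj
  omega

lemma bigF_spec4' (k j : ℕ) (hk : 3 ≤ k) (hko : k % 2 = 1) (hk3 : k ≠ 3) (hj : j ≤ 2 * k) :
    ∃ m, (j = 2 * m + 1 ∧ bigF k j + m = 2 * k + 5) ∨
      (j = 0 ∧ m = 0 ∧ bigF k j = 1) ∨
      (j = 2 * m ∧ 1 ≤ m ∧ m + 4 ≤ k ∧ bigF k j = m + 5) ∨
      (j = 2 * m ∧ 1 ≤ m ∧ k < m + 4 ∧ bigF k j + k = m + 5) := by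
  refine ⟨j / 2, ?_⟩
  have := bigF_spec4 k j hk hko hk3 hj
  omega

lemma c4F_inj (k i i' : ℕ) (hk : 1 ≤ k) (hi : i ≤ 3) (hi' : i' ≤ 3)
    (h : c4F k i = c4F k i') : i = i' := by
  rcases k_cases k hk with rfl | rfl | ⟨h3, he⟩ | ⟨h3, ho, hne⟩
  · have := c4F_spec1 i hi; have := c4F_spec1 i' hi'; omega
  · have := c4F_spec2 i hi; have := c4F_spec2 i' hi'; omega
  · have := c4F_spec3 k i h3 hi; have := c4F_spec3 k i' h3 hi'; omega
  · have := c4F_spec3 k i h3 hi; have := c4F_spec3 k i' h3 hi'; omega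

lemma bigF_inj (k j j' : ℕ) (hk : 1 ≤ k) (hj : j ≤ 2 * k) (hj' : j' ≤ 2 * k)
    (h : bigF k j = bigF k j') : j = j' := by
  rcases k_cases k hk with rfl | rfl | ⟨h3, he⟩ | ⟨h3, ho, hne⟩
  · have := bigF_spec1 j hj; have := bigF_spec1 j' hj'; omega
  · have := bigF_spec2 j hj; have := bigF_spec2 j' hj'; omega
  · obtain ⟨m1, t1⟩ := bigF_spec3' k j h3 he hj
    obtain ⟨m2, t2⟩ := bigF_spec3' k j' h3 he hj'
    omega
  · obtain ⟨m1, t1⟩ := bigF_spec4' k j h3 ho hne hj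
    obtain ⟨m2, t2⟩ := bigF_spec4' k j' h3 ho hne hj'
    omega

lemma c4F_ne_bigF (k i j : ℕ) (hk : 1 ≤ k) (hi : i ≤ 3) (hj : j ≤ 2 * k) :
    c4F k i ≠ bigF k j := by
  rcases k_cases k hk with rfl | rfl | ⟨h3, he⟩ | ⟨h3, ho, hne⟩
  · have := c4F_spec1 i hi; have := bigF_spec1 j hj; omega
  · have := c4F_spec2 i hi; have := bigF_spec2 j hj; omega
  · have := c4F_spec3 k i h3 hi
    obtain ⟨m1, t1⟩ := bigF_spec3' k j h3 he hj
    omega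
  · have := c4F_spec3 k i h3 hi
    obtain ⟨m1, t1⟩ := bigF_spec4' k j h3 ho hne hj
    omega

lemma c4F_mem (k i : ℕ) (hk : 1 ≤ k) (hi : i ≤ 3) :
    1 ≤ c4F k i ∧ c4F k i ≤ 2 * k + 5 := by
  rcases k_cases k hk with rfl | rfl | ⟨h3, he⟩ | ⟨h3, ho, hne⟩
  · have := c4F_spec1 i hi; omega
  · have := c4F_spec2 i hi; omega
  · have := c4F_spec3 k i h3 hi; omega
  · have := c4F_spec3 k i h3 hi; omega

lemma bigF_mem (k j : ℕ) (hk : 1 ≤ k) (hj : j ≤ 2 * k) :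
    1 ≤ bigF k j ∧ bigF k j ≤ 2 * k + 5 := by
  rcases k_cases k hk with rfl | rfl | ⟨h3, he⟩ | ⟨h3, ho, hne⟩
  · have := bigF_spec1 j hj; omega
  · have := bigF_spec2 j hj; omega
  · obtain ⟨m1, t1⟩ := bigF_spec3' k j h3 he hj; omega
  · obtain ⟨m1, t1⟩ := bigF_spec4' k j h3 ho hne hj; omega

/-- Successor predicate on the odd circuit. -/
def SuccRel (k j sj : ℕ) : Prop := (sj = 0 ∧ j + 1 = 2 * k + 1) ∨ (sj = j + 1 ∧ j + 1 < 2 * k + 1)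

lemma succRel_of_mod (k j : ℕ) (h : j < 2 * k + 1) : SuccRel k j ((j + 1) % (2 * k + 1)) := by
  unfold SuccRel
  rcases Nat.lt_or_ge (j + 1) (2 * k + 1) with h1 | h1
  · right; exact ⟨Nat.mod_eq_of_lt h1, h1⟩
  · left
    have hj : j + 1 = 2 * k + 1 := by omega
    refine ⟨?_, hj⟩
    rw [hj]
    exact Nat.mod_self _

lemma bigD_inj (k j sj j' sj' : ℕ) (hk : 1 ≤ k)
    (hj : j ≤ 2 * k) (hj' : j' ≤ 2 * k) (hs : SuccRel k j sj) (hs' : SuccRel k j' sj')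
    (h : (bigF k sj : ℤ) - bigF k j = (bigF k sj' : ℤ) - bigF k j') : j = j' := by
  unfold SuccRel at hs hs'
  rcases k_cases k hk with rfl | rfl | ⟨h3, he⟩ | ⟨h3, ho, hne⟩
  · have := bigF_spec1 j hj; have := bigF_spec1 j' hj'
    have := bigF_spec1 sj (by omega); have := bigF_spec1 sj' (by omega); omega
  · have t1 := bigF_spec2 j hj; have t2 := bigF_spec2 j' hj'
    have t3 := bigF_spec2 sj (by omega); have t4 := bigF_spec2 sj' (by omega)
    rcases t1 with t1 | t1 | t1 | t1 | t1 <;> rcases t2 with t2 | t2 | t2 | t2 | t2 <;> omega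
  · obtain ⟨m1, t1⟩ := bigF_spec3' k j h3 he hj
    obtain ⟨m2, t2⟩ := bigF_spec3' k j' h3 he hj'
    obtain ⟨m3, t3⟩ := bigF_spec3' k sj h3 he (by omega)
    obtain ⟨m4, t4⟩ := bigF_spec3' k sj' h3 he (by omega)
    rcases t1 with t1 | t1 <;> rcases t2 with t2 | t2 <;> omega
  · obtain ⟨m1, t1⟩ := bigF_spec4' k j h3 ho hne hj
    obtain ⟨m2, t2⟩ := bigF_spec4' k j' h3 ho hne hj'
    obtain ⟨m3, t3⟩ := bigF_spec4' k sj h3 ho hne (by omega)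
    obtain ⟨m4, t4⟩ := bigF_spec4' k sj' h3 ho hne (by omega)
    rcases t1 with t1 | t1 | t1 | t1 <;> rcases t2 with t2 | t2 | t2 | t2 <;> omega

lemma c4D_inj (k i i' : ℕ) (hk : 1 ≤ k) (hi : i ≤ 3) (hi' : i' ≤ 3)
    (h : (c4F k ((i + 1) % 4) : ℤ) - c4F k i = (c4F k ((i' + 1) % 4) : ℤ) - c4F k i') :
    i = i' := by
  rcases k_cases k hk with rfl | rfl | ⟨h3, he⟩ | ⟨h3, ho, hne⟩
  · have := c4F_spec1 i hi; have := c4F_spec1 i' hi'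
    have := c4F_spec1 ((i + 1) % 4) (by omega); have := c4F_spec1 ((i' + 1) % 4) (by omega)
    omega
  · have := c4F_spec2 i hi; have := c4F_spec2 i' hi'
    have := c4F_spec2 ((i + 1) % 4) (by omega); have := c4F_spec2 ((i' + 1) % 4) (by omega)
    omega
  · have := c4F_spec3 k i h3 hi; have := c4F_spec3 k i' h3 hi'
    have := c4F_spec3 k ((i + 1) % 4) h3 (by omega)
    have := c4F_spec3 k ((i' + 1) % 4) h3 (by omega); omega
  · have := c4F_spec3 k i h3 hi; have := c4F_spec3 k i' h3 hi'
    have := c4F_spec3 k ((i + 1) % 4) h3 (by omega)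
    have := c4F_spec3 k ((i' + 1) % 4) h3 (by omega); omega

lemma c4D_ne_bigD (k i j sj : ℕ) (hk : 1 ≤ k) (hi : i ≤ 3) (hj : j ≤ 2 * k)
    (hs : SuccRel k j sj) :
    (c4F k ((i + 1) % 4) : ℤ) - c4F k i ≠ (bigF k sj : ℤ) - bigF k j := by
  unfold SuccRel at hs
  rcases k_cases k hk with rfl | rfl | ⟨h3, he⟩ | ⟨h3, ho, hne⟩
  · have := c4F_spec1 i hi; have := c4F_spec1 ((i + 1) % 4) (by omega)
    have := bigF_spec1 j hj; have := bigF_spec1 sj (by omega); omega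
  · have := c4F_spec2 i hi; have := c4F_spec2 ((i + 1) % 4) (by omega)
    have := bigF_spec2 j hj; have := bigF_spec2 sj (by omega); omega
  · have := c4F_spec3 k i h3 hi; have := c4F_spec3 k ((i + 1) % 4) h3 (by omega)
    obtain ⟨m1, t1⟩ := bigF_spec3' k j h3 he hj
    obtain ⟨m2, t2⟩ := bigF_spec3' k sj h3 he (by omega)
    omega
  · have := c4F_spec3 k i h3 hi; have := c4F_spec3 k ((i + 1) % 4) h3 (by omega)
    obtain ⟨m1, t1⟩ := bigF_spec4' k j h3 ho hne hj
    obtain ⟨m2, t2⟩ := bigF_spec4' k sj h3 ho hne (by omega)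
    omega

/-- A bijection onto the target interval, via cardinality. -/
lemma bijOn_helper {V : Type} [Fintype V] (f : V → ℤ) (hinj : Function.Injective f)
    (hmap : ∀ v, f v ∈ Set.Icc 1 (Fintype.card V : ℤ)) :
    Set.BijOn f Set.univ (Set.Icc 1 (Fintype.card V : ℤ)) := by
  refine ⟨fun v _ => hmap v, hinj.injOn, ?_⟩
  have hsub : f '' Set.univ ⊆ Set.Icc 1 (Fintype.card V : ℤ) := by
    rintro _ ⟨v, -, rfl⟩; exact hmap v
  have hfin : (Set.Icc (1 : ℤ) (Fintype.card V : ℤ)).Finite := Set.finite_Icc _ _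
  have h1 : (f '' Set.univ).ncard = Fintype.card V := by
    rw [Set.ncard_image_of_injective _ hinj, Set.ncard_univ, Nat.card_eq_fintype_card]
  have h2 : (Set.Icc (1 : ℤ) (Fintype.card V : ℤ)).ncard = Fintype.card V := by
    rw [← Finset.coe_Icc, Set.ncard_coe_finset, Int.card_Icc]
    omega
  have : f '' Set.univ = Set.Icc 1 (Fintype.card V : ℤ) :=
    Set.eq_of_subset_of_ncard_le hsub (by omega) hfin
  exact this.ge

/-- Injectivity of the difference map on a union of two arc families. -/
lemma injOn_union {α β V : Type} (g1 : α → V × V) (g2 : β → V × V) (d : V × V → ℤ)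
    (h1 : ∀ a a', d (g1 a) = d (g1 a') → a = a')
    (h2 : ∀ b b', d (g2 b) = d (g2 b') → b = b')
    (h12 : ∀ a b, d (g1 a) ≠ d (g2 b)) :
    Set.InjOn d (Set.range g1 ∪ Set.range g2) := by
  rintro p (⟨a, rfl⟩ | ⟨b, rfl⟩) q (⟨a', rfl⟩ | ⟨b', rfl⟩) h
  · rw [h1 a a' h]
  · exact absurd h (h12 a b')
  · exact absurd h.symm (h12 a' b)
  · rw [h2 b b' h]

/-- For every `k ≥ 1`, the disjoint union `C4 + C_{2k+1}` has a gdl. -/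
theorem stmt_15 (k : ℕ) (hk : 1 ≤ k) :
    ∃ f : Fin 4 ⊕ Fin (2 * k + 1) → ℤ,
      IsGdlOn
        (Set.range (fun i : Fin 4 =>
            ((Sum.inl i : Fin 4 ⊕ Fin (2 * k + 1)), (Sum.inl (cyc 4 (by omega) i)))) ∪
         Set.range (fun j : Fin (2 * k + 1) =>
            ((Sum.inr j : Fin 4 ⊕ Fin (2 * k + 1)), (Sum.inr (cyc (2 * k + 1) (by omega) j))))) f := by
  refine ⟨Sum.elim (fun i => (c4F k i.val : ℤ)) (fun j => (bigF k j.val : ℤ)), ?_, ?_⟩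
  · -- bijectivity
    have hcard : (Fintype.card (Fin 4 ⊕ Fin (2 * k + 1)) : ℤ) = ((2 * k + 5 : ℕ) : ℤ) := by
      have : Fintype.card (Fin 4 ⊕ Fin (2 * k + 1)) = 2 * k + 5 := by
        simp [Fintype.card_sum]; omega
      rw [this]
    apply bijOn_helper
    · intro v w h
      match v, w with
      | Sum.inl i, Sum.inl i' =>
        simp only [Sum.elim_inl, Nat.cast_inj] at h
        have := c4F_inj k i.val i'.val hk (by omega) (by omega) h
        exact congrArg Sum.inl (Fin.ext this)
      | Sum.inl i, Sum.inr j =>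
        simp only [Sum.elim_inl, Sum.elim_inr, Nat.cast_inj] at h
        exact absurd h (c4F_ne_bigF k i.val j.val hk (by omega) (by omega))
      | Sum.inr j, Sum.inl i =>
        simp only [Sum.elim_inl, Sum.elim_inr, Nat.cast_inj] at h
        exact absurd h.symm (c4F_ne_bigF k i.val j.val hk (by omega) (by omega))
      | Sum.inr j, Sum.inr j' =>
        simp only [Sum.elim_inr, Nat.cast_inj] at h
        have := bigF_inj k j.val j'.val hk (by omega) (by omega) h
        exact congrArg Sum.inr (Fin.ext this)
    · intro v
      rw [Set.mem_Icc, hcard]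
      match v with
      | Sum.inl i =>
        have := c4F_mem k i.val hk (by omega)
        simp only [Sum.elim_inl]
        exact ⟨by exact_mod_cast this.1, by exact_mod_cast this.2⟩
      | Sum.inr j =>
        have := bigF_mem k j.val hk (by omega)
        simp only [Sum.elim_inr]
        exact ⟨by exact_mod_cast this.1, by exact_mod_cast this.2⟩
  · -- arc differences
    apply injOn_union
    · intro a a' h
      simp only [Sum.elim_inl] at h
      have hc : (cyc 4 (by omega) a).val = (a.val + 1) % 4 := rfl
      have hc' : (cyc 4 (by omega) a').val = (a'.val + 1) % 4 := rfl
      have := c4D_inj k a.val a'.val hk (by omega) (by omega) (by rw [← hc, ← hc']; exact h)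
      exact Fin.ext this
    · intro b b' h
      simp only [Sum.elim_inr] at h
      have hc : (cyc (2 * k + 1) (by omega) b).val = (b.val + 1) % (2 * k + 1) := rfl
      have hc' : (cyc (2 * k + 1) (by omega) b').val = (b'.val + 1) % (2 * k + 1) := rfl
      have hs := succRel_of_mod k b.val b.isLt
      have hs' := succRel_of_mod k b'.val b'.isLt
      have := bigD_inj k b.val ((b.val + 1) % (2 * k + 1)) b'.val ((b'.val + 1) % (2 * k + 1))
        hk (by omega) (by omega) hs hs' (by rw [← hc, ← hc']; exact h)
      exact Fin.ext this
    · intro a b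
      simp only [Sum.elim_inl, Sum.elim_inr]
      have hc : (cyc 4 (by omega) a).val = (a.val + 1) % 4 := rfl
      have hc' : (cyc (2 * k + 1) (by omega) b).val = (b.val + 1) % (2 * k + 1) := rfl
      have hs := succRel_of_mod k b.val b.isLt
      have := c4D_ne_bigD k a.val b.val ((b.val + 1) % (2 * k + 1)) hk (by omega) (by omega) hs
      rw [← hc, ← hc'] at this
      exact this
end

section
/- For every k ≥ 5, the disjoint union Ck + C3 of a directed k-circuit and a directed 3-circuit has a graceful difference labeling. -/
/-- Labels of the `k`-circuit: a zigzag on `{3,…,k+2}`, with the last three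
positions rotated when `k ≡ 0, 3 (mod 4)`. -/
def Flab (k i : ℕ) : ℕ :=
  if (k % 4 = 0 ∨ k % 4 = 3) ∧ k - 3 ≤ i then
    (if i = k - 3 then k / 2 + 3 else if i = k - 2 then k / 2 + 4 else k / 2 + 2)
  else if i % 2 = k % 2 then 3 + i / 2 else k + 2 - i / 2

/-- Closed form of the arc differences of the `k`-circuit. -/
def Dlab (k i : ℕ) : ℤ :=
  if k % 4 = 0 ∨ k % 4 = 3 then
    if i = k - 1 then (if k % 2 = 0 then 1 - (k / 2 : ℕ) else (k / 2 : ℕ) + 1)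
    else if i = k - 2 then -2
    else if i = k - 3 then 1
    else if i = k - 4 then 2
    else if i % 2 = k % 2 then (k : ℤ) - 1 - i else (i : ℤ) + 1 - k
  else
    if i = k - 1 then (if k % 2 = 0 then -(k / 2 : ℕ) else (k / 2 : ℕ))
    else if i % 2 = k % 2 then (k : ℤ) - 1 - i else (i : ℤ) + 1 - k

theorem Flab_inj (k : ℕ) (hk : 5 ≤ k) (i j : ℕ) (hi : i < k) (hj : j < k)
    (h : Flab k i = Flab k j) : i = j := by
  unfold Flab at h
  split_ifs at h <;> omega

theorem Flab_bound (k : ℕ) (hk : 5 ≤ k) (i : ℕ) (hi : i < k) :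
    3 ≤ Flab k i ∧ Flab k i ≤ k + 2 := by
  unfold Flab
  split_ifs <;> omega

set_option maxHeartbeats 1600000 in
theorem dspec (k : ℕ) (hk : 5 ≤ k) (i : ℕ) (hi : i < k) :
    (Flab k ((i+1) % k) : ℤ) - Flab k i = Dlab k i := by
  rcases eq_or_lt_of_le (Nat.succ_le_of_lt hi) with h1 | h1
  · rw [show i + 1 = k from h1, Nat.mod_self]
    unfold Flab Dlab
    split_ifs <;> omega
  · rw [Nat.mod_eq_of_lt h1]
    unfold Flab Dlab
    split_ifs <;> omega

set_option maxHeartbeats 1600000 in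
theorem dinj (k : ℕ) (hk : 5 ≤ k) (i j : ℕ) (hi : i < k) (hj : j < k)
    (h : Dlab k i = Dlab k j) : i = j := by
  unfold Dlab at h
  split_ifs at h <;> omega

set_option maxHeartbeats 1600000 in
theorem dbound (k : ℕ) (hk : 5 ≤ k) (i : ℕ) (hi : i < k) :
    -(k : ℤ) + 1 ≤ Dlab k i ∧ Dlab k i ≤ (k : ℤ) - 1 ∧ Dlab k i ≠ -1 := by
  unfold Dlab
  split_ifs <;> refine ⟨by omega, by omega, by omega⟩

/-- The full labeling: the `3`-circuit gets `1, k+3, 2`. -/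
def gdlF (k : ℕ) : Fin k ⊕ Fin 3 → ℤ := fun v =>
  match v with
  | .inl i => (Flab k i.val : ℤ)
  | .inr j => if j.val = 0 then 1 else if j.val = 1 then (k : ℤ) + 3 else 2

/-- For every `k ≥ 5`, the disjoint union `C_k + C3` has a gdl. -/
theorem stmt_16 (k : ℕ) (hk : 5 ≤ k) :
    ∃ f : Fin k ⊕ Fin 3 → ℤ,
      IsGdlOn
        (Set.range (fun i : Fin k =>
            ((Sum.inl i : Fin k ⊕ Fin 3), (Sum.inl (cyc k (by omega) i)))) ∪
         Set.range (fun j : Fin 3 =>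
            ((Sum.inr j : Fin k ⊕ Fin 3), (Sum.inr (cyc 3 (by omega) j))))) f := by
  have hk0 : 0 < k := by omega
  refine ⟨gdlF k, ?_, ?_⟩
  · -- bijectivity
    have hcard : (Fintype.card (Fin k ⊕ Fin 3) : ℤ) = (k : ℤ) + 3 := by
      simp
    rw [hcard]
    have hmap : Set.MapsTo (gdlF k) Set.univ (Set.Icc 1 ((k : ℤ) + 3)) := by
      intro v _
      match v with
      | .inl i =>
        have := Flab_bound k hk i.val i.isLt
        simp only [gdlF, Set.mem_Icc]
        omega
      | .inr j =>
        simp only [gdlF, Set.mem_Icc]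
        split_ifs <;> omega
    have hinj : Set.InjOn (gdlF k) Set.univ := by
      intro a _ b _ h
      match a, b with
      | .inl i, .inl i' =>
        have := Flab_inj k hk i.val i'.val i.isLt i'.isLt (by
          simpa only [gdlF, Nat.cast_inj] using h)
        exact congrArg Sum.inl (Fin.ext this)
      | .inl i, .inr j =>
        exfalso
        have := Flab_bound k hk i.val i.isLt
        simp only [gdlF] at h
        split_ifs at h <;> omega
      | .inr j, .inl i =>
        exfalso
        have := Flab_bound k hk i.val i.isLt
        simp only [gdlF] at h
        split_ifs at h <;> omega
      | .inr j, .inr j' =>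
        have hj := j.isLt
        have hj' := j'.isLt
        simp only [gdlF] at h
        have : j.val = j'.val := by split_ifs at h <;> omega
        exact congrArg Sum.inr (Fin.ext this)
    refine ⟨hmap, hinj, ?_⟩
    -- surjectivity via cardinality
    have h1 : (gdlF k '' Set.univ) ⊆ Set.Icc 1 ((k : ℤ) + 3) := hmap.image_subset
    have h2 : (Set.Icc (1 : ℤ) ((k : ℤ) + 3)).ncard ≤ (gdlF k '' Set.univ).ncard := by
      have e1 : (gdlF k '' Set.univ).ncard = (Set.univ : Set (Fin k ⊕ Fin 3)).ncard :=
        Set.ncard_image_of_injOn hinj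
      have e2 : (Set.univ : Set (Fin k ⊕ Fin 3)).ncard = k + 3 := by
        rw [Set.ncard_univ, Nat.card_eq_fintype_card]
        simp
      have e3 : (Set.Icc (1 : ℤ) ((k : ℤ) + 3)).ncard = k + 3 := by
        rw [← Finset.coe_Icc, Set.ncard_coe_finset, Int.card_Icc]
        omega
      omega
    have : gdlF k '' Set.univ = Set.Icc 1 ((k : ℤ) + 3) :=
      Set.eq_of_subset_of_ncard_le h1 h2 (Set.finite_Icc _ _)
    exact this.superset
  · -- injectivity of differences
    intro a ha b hb hab
    rcases ha with ⟨i, rfl⟩ | ⟨p, rfl⟩ <;> rcases hb with ⟨j, rfl⟩ | ⟨q, rfl⟩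
    · -- inl inl
      simp only [gdlF, cyc] at hab
      rw [dspec k hk i.val i.isLt, dspec k hk j.val j.isLt] at hab
      have := dinj k hk i.val j.val i.isLt j.isLt hab
      have : i = j := Fin.ext this
      subst this; rfl
    · -- inl inr
      exfalso
      simp only [gdlF, cyc] at hab
      rw [dspec k hk i.val i.isLt] at hab
      have hb := dbound k hk i.val i.isLt
      fin_cases q <;> simp at hab <;> omega
    · -- inr inl
      exfalso
      simp only [gdlF, cyc] at hab
      rw [dspec k hk j.val j.isLt] at hab
      have hb := dbound k hk j.val j.isLt
      fin_cases p <;> simp at hab <;> omega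
    · -- inr inr
      have : p = q := by
        fin_cases p <;> fin_cases q <;> simp [gdlF, cyc] at hab ⊢ <;> omega
      subst this; rfl
end
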